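/- arXiv:1804.02512 — 6 statements merged into one kernel-verified Lean document; each statement's English description precedes it below -/
import Mathlib

section
/- Let E be a real vector space, let M ⊆ E be a convex set, and let τ > 0. Then the truncated-cone velocity obstacle {v ∈ E : ∃ t ∈ (0, τ], t•v ∈ M} is a convex set. -/
/-- The truncated-cone velocity obstacle over a convex set is convex. -/
theorem velocity_obstacle_convex
    {E : Type*} [AddCommGroup E] [Module ℝ E]
    (M : Set E) (hM : Convex ℝ M) (τ : ℝ) (hτ : 0 < τ) :
    Convex ℝ {v : E | ∃ t ∈ Set.Ioc (0 : ℝ) τ, t • v ∈ M} := by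
  rintro v₁ ⟨t₁, ⟨ht₁0, ht₁τ⟩, hm₁⟩ v₂ ⟨t₂, ⟨ht₂0, ht₂τ⟩, hm₂⟩ a b ha hb hab
  have hD : 0 < a * t₂ + b * t₁ := by
    rcases ha.lt_or_eq with h | h
    · have := mul_pos h ht₂0
      nlinarith [mul_nonneg hb ht₁0.le]
    · have hb1 : b = 1 := by linarith
      rw [← h, hb1]; simpa using ht₁0
  refine ⟨t₁ * t₂ / (a * t₂ + b * t₁), ⟨by positivity, ?_⟩, ?_⟩
  · rw [div_le_iff₀ hD]
    have ht : t₁ * t₂ * (a + b) = t₁ * t₂ := by rw [hab]; ring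
    nlinarith [mul_nonneg (mul_nonneg ha ht₂0.le) (sub_nonneg.2 ht₁τ),
      mul_nonneg (mul_nonneg hb ht₁0.le) (sub_nonneg.2 ht₂τ), ht]
  · have key := hM hm₁ hm₂ (a := a * t₂ / (a * t₂ + b * t₁))
      (b := b * t₁ / (a * t₂ + b * t₁)) (by positivity) (by positivity)
      (by field_simp)
    have : (a * t₂ / (a * t₂ + b * t₁)) • t₁ • v₁ +
        (b * t₁ / (a * t₂ + b * t₁)) • t₂ • v₂ =
        (t₁ * t₂ / (a * t₂ + b * t₁)) • (a • v₁ + b • v₂) := by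
      rw [smul_smul, smul_smul, smul_add, smul_smul, smul_smul]
      ring_nf
    rwa [this] at key
end

section
/- Let E be a real normed vector space, let a₁, a₂, b₁, b₂ ∈ E and r₁, r₂, s₁, s₂ ≥ 0. Then the Minkowski sum of the two tuples convexHull(closedBall(a₁, r₁) ∪ closedBall(a₂, r₂)) + convexHull(closedBall(b₁, s₁) ∪ closedBall(b₂, s₂)) equals convexHull(⋃_{i,j ∈ {1,2}} closedBall(aᵢ + bⱼ, rᵢ + sⱼ)), the convex hull of the four closed balls centered at the pairwise sums of centers with radii the pairwise sums of radii. -/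
open Pointwise

open Metric

theorem closedBall_eq_singleton_add_smul_closedUnitBall {E : Type*} [NormedAddCommGroup E]
    [NormedSpace ℝ E] (a : E) {r : ℝ} (hr : 0 ≤ r) :
    closedBall a r = {a} + r • closedBall (0 : E) 1 := by
  rw [smul_closedBall r 0 zero_le_one, smul_zero, Real.norm_of_nonneg hr, mul_one,
    singleton_add_closedBall, add_zero]

/-- Unlike `closedBall_add_closedBall`, no `ProperSpace` is needed: the radii add because
the unit ball is convex, `r • B + s • B = (r + s) • B`. -/
theorem closedBall_add_closedBall_of_nonneg {E : Type*} [NormedAddCommGroup E]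
    [NormedSpace ℝ E] {r s : ℝ} (hr : 0 ≤ r) (hs : 0 ≤ s) (a b : E) :
    closedBall a r + closedBall b s = closedBall (a + b) (r + s) := by
  rw [closedBall_eq_singleton_add_smul_closedUnitBall a hr,
    closedBall_eq_singleton_add_smul_closedUnitBall b hs,
    closedBall_eq_singleton_add_smul_closedUnitBall (a + b) (add_nonneg hr hs),
    (convex_closedBall (0 : E) 1).add_smul hr hs, ← Set.singleton_add_singleton,
    add_add_add_comm]

/-- The Minkowski sum of two tuples is the convex hull of the four closed balls
centered at the pairwise sums of centers with the pairwise sums of radii. -/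
theorem minkowski_sum_of_tuples
    {E : Type*} [NormedAddCommGroup E] [NormedSpace ℝ E]
    (a₁ a₂ b₁ b₂ : E) (r₁ r₂ s₁ s₂ : ℝ)
    (hr₁ : 0 ≤ r₁) (hr₂ : 0 ≤ r₂) (hs₁ : 0 ≤ s₁) (hs₂ : 0 ≤ s₂) :
    convexHull ℝ (closedBall a₁ r₁ ∪ closedBall a₂ r₂) +
      convexHull ℝ (closedBall b₁ s₁ ∪ closedBall b₂ s₂) =
      convexHull ℝ
        (closedBall (a₁ + b₁) (r₁ + s₁) ∪ closedBall (a₁ + b₂) (r₁ + s₂) ∪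
          closedBall (a₂ + b₁) (r₂ + s₁) ∪ closedBall (a₂ + b₂) (r₂ + s₂)) := by
  rw [← convexHull_add, Set.union_add, Set.add_union, Set.add_union,
    closedBall_add_closedBall_of_nonneg hr₁ hs₁, closedBall_add_closedBall_of_nonneg hr₁ hs₂,
    closedBall_add_closedBall_of_nonneg hr₂ hs₁, closedBall_add_closedBall_of_nonneg hr₂ hs₂,
    ← Set.union_assoc]
end

section
/- Let X be a metric space, K ⊆ X a bounded set and S ⊆ X a set such that the frontier of K is contained in S. If the complement Sᶜ is preconnected and unbounded, then K ⊆ S. (In particular, if the boundary contour of an agent is covered by its CTMAT region and the complement of the CTMAT region is connected and unbounded, then the whole agent is covered by the CTMAT region.) -/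
/-- If the frontier of a bounded set `K` is contained in `S` and the complement of
`S` is preconnected and unbounded, then `K ⊆ S`. -/
theorem subset_of_frontier_subset
    {X : Type*} [MetricSpace X] (K S : Set X)
    (hK : Bornology.IsBounded K) (hfr : frontier K ⊆ S)
    (hconn : IsPreconnected Sᶜ) (hub : ¬ Bornology.IsBounded Sᶜ) :
    K ⊆ S := by
  have hsub : Sᶜ ⊆ interior K ∪ (closure K)ᶜ := by
    intro x hx
    by_cases h1 : x ∈ interior K
    · exact Or.inl h1
    · by_cases h2 : x ∈ closure K
      · exact absurd (hfr ⟨h2, h1⟩) hx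
      · exact Or.inr h2
  have hdisj : Disjoint (interior K) (closure K)ᶜ :=
    Set.disjoint_compl_right_iff_subset.mpr (interior_subset.trans subset_closure)
  rcases hconn.subset_or_subset isOpen_interior (isClosed_closure.isOpen_compl)
      (by simpa using hdisj) hsub with h | h
  · exact absurd ((hK.subset interior_subset).subset h) hub
  · intro x hxK
    by_contra hxS
    exact h hxS (subset_closure hxK)
end

section
/- Let E be a real inner product space, c₁, c₂ ∈ E, r₁, r₂ ≥ 0, and let u ∈ E with ‖u‖ = 1. Then the width of the tuple convexHull(closedBall(c₁, r₁) ∪ closedBall(c₂, r₂)) in direction u, defined as sSup {⟪x, u⟫ : x in the tuple} − sInf {⟪x, u⟫ : x in the tuple}, equals the maximum over i, j ∈ {1, 2} of rᵢ + rⱼ + ⟪cᵢ − cⱼ, u⟫. (This is the paper's width formula w = rᵢ + rⱼ + d(cᵢ, cⱼ)·cos β for the pair of parallel tangent lines perpendicular to u.) -/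
open Metric Set
open scoped RealInnerProductSpace

/-!
Projecting onto the unit direction `u` is linear, so it maps the convex hull of the two balls
onto the convex hull of their projections. Each ball projects onto the interval
`[⟪cᵢ, u⟫ - rᵢ, ⟪cᵢ, u⟫ + rᵢ]`, so the tuple projects onto
`[min (⟪cⱼ, u⟫ - rⱼ), max (⟪cᵢ, u⟫ + rᵢ)]`, whose length is the maximum over `i, j` of
`(⟪cᵢ, u⟫ + rᵢ) - (⟪cⱼ, u⟫ - rⱼ)`.
-/

theorem convexHull_eq_Icc_of_isLeast_of_isGreatest {𝕜 : Type*} [Field 𝕜] [LinearOrder 𝕜]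
    [IsStrictOrderedRing 𝕜] {s : Set 𝕜} {a b : 𝕜} (ha : IsLeast s a) (hb : IsGreatest s b) :
    convexHull 𝕜 s = Icc a b := by
  refine Subset.antisymm (convexHull_min (fun _ hx => ⟨ha.2 hx, hb.2 hx⟩) (convex_Icc a b)) ?_
  rw [← segment_eq_Icc (ha.2 hb.1), ← convexHull_pair]
  exact convexHull_mono (pair_subset ha.1 hb.1)

theorem image_inner_closedBall_of_norm_eq_one {E : Type*} [NormedAddCommGroup E]
    [InnerProductSpace ℝ E] {u : E} (hu : ‖u‖ = 1) (c : E) (r : ℝ) :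
    (fun x => ⟪x, u⟫) '' closedBall c r = Icc (⟪c, u⟫ - r) (⟪c, u⟫ + r) := by
  ext t
  constructor
  · rintro ⟨x, hx, rfl⟩
    have hproj : |⟪x - c, u⟫| ≤ r := by
      calc |⟪x - c, u⟫| ≤ ‖x - c‖ * ‖u‖ := abs_real_inner_le_norm _ _
        _ ≤ r := by rw [hu, mul_one]; exact mem_closedBall_iff_norm.mp hx
    rw [inner_sub_left, abs_le] at hproj
    constructor <;> linarith
  · rintro ⟨hlo, hhi⟩
    refine ⟨c + (t - ⟪c, u⟫) • u, ?_, ?_⟩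
    · rw [mem_closedBall_iff_norm, add_sub_cancel_left, norm_smul, hu, mul_one,
        Real.norm_eq_abs, abs_le]
      constructor <;> linarith
    · simp only [inner_add_left, real_inner_smul_left, real_inner_self_eq_norm_sq, hu]
      ring

theorem max_sub_min_eq_max_max {α : Type*} [AddCommGroup α] [LinearOrder α]
    [IsOrderedAddMonoid α] (a b c d : α) :
    max a b - min c d = max (max (a - c) (a - d)) (max (b - c) (b - d)) := by
  rw [max_sub_sub_left, max_sub_sub_left, max_sub_sub_right]

/-- The width of a tuple in a unit direction `u` equals the maximum over
`i, j ∈ {1, 2}` of `rᵢ + rⱼ + ⟪cᵢ - cⱼ, u⟫`. -/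
theorem tuple_width
    {E : Type*} [NormedAddCommGroup E] [InnerProductSpace ℝ E]
    (c₁ c₂ : E) (r₁ r₂ : ℝ) (h₁ : 0 ≤ r₁) (h₂ : 0 ≤ r₂)
    (u : E) (hu : ‖u‖ = 1) :
    sSup {y : ℝ | ∃ x ∈ convexHull ℝ (closedBall c₁ r₁ ∪ closedBall c₂ r₂),
        (inner ℝ x u : ℝ) = y} -
      sInf {y : ℝ | ∃ x ∈ convexHull ℝ (closedBall c₁ r₁ ∪ closedBall c₂ r₂),
        (inner ℝ x u : ℝ) = y} =
      max (max (r₁ + r₁ + (inner ℝ (c₁ - c₁) u : ℝ)) (r₁ + r₂ + (inner ℝ (c₁ - c₂) u : ℝ)))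
        (max (r₂ + r₁ + (inner ℝ (c₂ - c₁) u : ℝ)) (r₂ + r₂ + (inner ℝ (c₂ - c₂) u : ℝ))) := by
  set a₁ := ⟪c₁, u⟫
  set a₂ := ⟪c₂, u⟫
  have hlin : IsLinearMap ℝ fun x : E => ⟪x, u⟫ :=
    ⟨fun x y => inner_add_left x y u, fun t x => real_inner_smul_left x u t⟩
  have hproj : (fun x : E => ⟪x, u⟫) '' convexHull ℝ (closedBall c₁ r₁ ∪ closedBall c₂ r₂) =
      Icc (min (a₁ - r₁) (a₂ - r₂)) (max (a₁ + r₁) (a₂ + r₂)) := by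
    rw [hlin.image_convexHull, image_union, image_inner_closedBall_of_norm_eq_one hu,
      image_inner_closedBall_of_norm_eq_one hu]
    exact convexHull_eq_Icc_of_isLeast_of_isGreatest
      ((isLeast_Icc (by linarith)).union (isLeast_Icc (by linarith)))
      ((isGreatest_Icc (by linarith)).union (isGreatest_Icc (by linarith)))
  have hle : min (a₁ - r₁) (a₂ - r₂) ≤ max (a₁ + r₁) (a₂ + r₂) :=
    (min_le_left _ _).trans (by linarith [le_max_left (a₁ + r₁) (a₂ + r₂)])
  change sSup ((fun x : E => ⟪x, u⟫) '' _) - sInf ((fun x : E => ⟪x, u⟫) '' _) = _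
  rw [hproj, csSup_Icc hle, csInf_Icc hle, max_sub_min_eq_max_max]
  simp only [inner_sub_left]
  congr 2 <;> ring
end

section
/- Let C be a convex subset of the plane ℝ² (EuclideanSpace ℝ (Fin 2)), let x ∈ ℝ² and r > 0 with closedBall(x, r) ⊆ C, and let p ∈ frontier C with dist(x, p) = r (p is a nearest point of the boundary of C to x). Then for every w ∈ C, ⟪w − p, p − x⟫ ≤ 0; i.e., C lies entirely in the closed half-plane through p with outward normal u = p − x. Consequently, any velocity v with ⟪v − p, p − x⟫ > 0 lies outside C. -/
/-!
Suppose some `w ∈ C` had `⟪w - p, p - x⟫ > 0`. Pushing `p` slightly away from `w` moves it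
strictly inside the ball `ball x r ⊆ interior C`, to a point `z` with `p` in the open segment
`(z, w)`. A segment from an interior point to a point of a convex set stays in the interior,
so `p ∈ interior C`, contradicting `p ∈ frontier C`.
-/

open Metric

section InnerProductSpace

variable {E : Type*} [NormedAddCommGroup E] [InnerProductSpace ℝ E]

theorem exists_mem_ball_mem_openSegment_of_inner_pos {x p w : E} {r : ℝ}
    (hp : dist x p ≤ r) (hw : 0 < inner ℝ (w - p) (p - x)) :
    ∃ z ∈ ball x r, p ∈ openSegment ℝ z w := by
  set δ := inner ℝ (w - p) (p - x)
  have hpw : 0 < ‖p - w‖ ^ 2 := by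
    have hne : p ≠ w := by rintro rfl; simp [δ] at hw
    exact pow_pos (norm_pos_iff.mpr (sub_ne_zero.mpr hne)) 2
  -- `s` is chosen so that `‖s • (p - w)‖² = s δ`, half of the first-order decrease `2 s δ`.
  set s := δ / ‖p - w‖ ^ 2
  have hs : 0 < s := div_pos hw hpw
  refine ⟨p + s • (p - w), ?_, mem_openSegment_iff_div.mpr ⟨1, s, one_pos, hs, ?_⟩⟩
  · have hpx : ‖p - x‖ ≤ r := by rwa [← dist_eq_norm, dist_comm]
    have hsq : ‖p + s • (p - w) - x‖ ^ 2 = ‖p - x‖ ^ 2 - s * δ := by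
      have hinner : inner ℝ (p - x) (p - w) = -δ := by
        rw [real_inner_comm, ← neg_sub w p, inner_neg_left]
      rw [show p + s • (p - w) - x = (p - x) + s • (p - w) by abel, norm_add_sq_real,
        inner_smul_right, hinner, norm_smul, mul_pow, Real.norm_of_nonneg hs.le,
        pow_two s, mul_assoc, div_mul_cancel₀ δ hpw.ne']
      ring
    rw [mem_ball, dist_eq_norm]
    refine lt_of_pow_lt_pow_left₀ 2 ((norm_nonneg _).trans hpx) ?_
    nlinarith [mul_pos hs hw, norm_nonneg (p - x)]
  · have h1s : 1 + s ≠ 0 := by positivity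
    match_scalars <;> field_simp
    ring

theorem inner_sub_nonpos_of_mem_frontier {C : Set E} (hC : Convex ℝ C) {x p w : E} {r : ℝ}
    (hball : ball x r ⊆ C) (hp : p ∈ frontier C) (hd : dist x p ≤ r) (hw : w ∈ C) :
    inner ℝ (w - p) (p - x) ≤ 0 := by
  by_contra! hpos
  obtain ⟨z, hz, hpz⟩ := exists_mem_ball_mem_openSegment_of_inner_pos hd hpos
  have hz_int : z ∈ interior C := interior_maximal hball isOpen_ball hz
  exact hp.2 (hC.openSegment_interior_self_subset_interior hz_int hw hpz)

end InnerProductSpace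

theorem convex_subset_halfplane_of_nearest_boundary_point_general
    (C : Set (EuclideanSpace ℝ (Fin 2))) (hC : Convex ℝ C)
    (x : EuclideanSpace ℝ (Fin 2)) (r : ℝ)
    (hball : closedBall x r ⊆ C)
    (p : EuclideanSpace ℝ (Fin 2)) (hp : p ∈ frontier C) (hd : dist x p = r) :
    (∀ w ∈ C, (inner ℝ (w - p) (p - x) : ℝ) ≤ 0) ∧
      ∀ v : EuclideanSpace ℝ (Fin 2), (0 : ℝ) < inner ℝ (v - p) (p - x) → v ∉ C := by
  have halfplane : ∀ w ∈ C, (inner ℝ (w - p) (p - x) : ℝ) ≤ 0 := fun w hw =>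
    inner_sub_nonpos_of_mem_frontier hC (ball_subset_closedBall.trans hball) hp hd.le hw
  exact ⟨halfplane, fun v hv hvC => (halfplane v hvC).not_gt hv⟩

/-- A convex set `C` containing the ball `closedBall x r` lies in the closed half-plane
through its nearest boundary point `p` with outward normal `p - x`; consequently any
velocity `v` with `⟪v - p, p - x⟫ > 0` lies outside `C`. -/
theorem convex_subset_halfplane_of_nearest_boundary_point
    (C : Set (EuclideanSpace ℝ (Fin 2))) (hC : Convex ℝ C)
    (x : EuclideanSpace ℝ (Fin 2)) (r : ℝ) (hr : 0 < r)
    (hball : closedBall x r ⊆ C)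
    (p : EuclideanSpace ℝ (Fin 2)) (hp : p ∈ frontier C) (hd : dist x p = r) :
    (∀ w ∈ C, (inner ℝ (w - p) (p - x) : ℝ) ≤ 0) ∧
      ∀ v : EuclideanSpace ℝ (Fin 2), (0 : ℝ) < inner ℝ (v - p) (p - x) → v ∉ C :=
  convex_subset_halfplane_of_nearest_boundary_point_general C hC x r hball p hp hd
end

section
/- Let C be a convex subset of the plane ℝ² (EuclideanSpace ℝ (Fin 2)), let v_A, v_B ∈ ℝ², set x = v_A − v_B, and suppose there is r > 0 with closedBall(x, r) ⊆ C and a point p ∈ frontier C with dist(x, p) = r. Let u = p − x. If the new velocities v_A', v_B' satisfy the reciprocal half-plane constraints ⟪v_A' − (v_A + (1/2)•u), u⟫ ≥ 0 and ⟪v_B' − (v_B − (1/2)•u), u⟫ ≤ 0 (each agent takes half the responsibility u/2), then ⟪(v_A' − v_B') − p, u⟫ ≥ 0, and hence the new relative velocity v_A' − v_B' does not lie in the interior of C. -/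
/-!
Since `p - x = u` and `v_A - v_B = x`, the vector `(v_A' - v_B') - p` is the difference of the two
slacks in the half-plane constraints, so `⟪(v_A' - v_B') - p, u⟫ ≥ 0`. On the other hand, a
hyperplane through `p` separating it from the open convex set `interior C` also supports the
ball `closedBall x r ⊆ closure (interior C)` at `p`, so its normal is a nonnegative multiple of
the ball's outward normal `u`; hence `⟪y - p, u⟫ < 0` for every `y ∈ interior C`.
-/

open Metric

section

variable {E : Type*} [NormedAddCommGroup E] [InnerProductSpace ℝ E]

open scoped RealInnerProductSpace

theorem Convex.exists_forall_inner_lt_of_isOpen [CompleteSpace E] {s : Set E}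
    (hs : Convex ℝ s) (hso : IsOpen s) {p : E} (hp : p ∉ s) :
    ∃ w : E, ∀ z ∈ s, ⟪w, z⟫ < ⟪w, p⟫ := by
  obtain ⟨f, hf⟩ := geometric_hahn_banach_open_point hs hso hp
  refine ⟨(InnerProductSpace.toDual ℝ E).symm f, fun z hz => ?_⟩
  simpa only [InnerProductSpace.toDual_symm_apply] using hf z hz

theorem smul_eq_norm_smul_of_forall_mem_closedBall_inner_le {x p w : E} {r : ℝ}
    (hd : dist x p = r) (hw : ∀ z ∈ closedBall x r, ⟪w, z⟫ ≤ ⟪w, p⟫) :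
    r • w = ‖w‖ • (p - x) := by
  have hpx : ‖p - x‖ = r := by rw [← dist_eq_norm, dist_comm, hd]
  rcases eq_or_ne w 0 with rfl | hw0
  · simp
  have hnw : 0 < ‖w‖ := norm_pos_iff.mpr hw0
  have hmem : x + (r / ‖w‖) • w ∈ closedBall x r := by
    rw [mem_closedBall, dist_eq_norm, add_sub_cancel_left, norm_smul, Real.norm_eq_abs,
      abs_div, abs_norm, div_mul_cancel₀ _ hnw.ne', abs_of_nonneg (hpx ▸ norm_nonneg _)]
  have hle : r * ‖w‖ ≤ ⟪w, p - x⟫ := by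
    have h := hw _ hmem
    rw [inner_add_right, real_inner_smul_right, real_inner_self_eq_norm_sq] at h
    have hcancel : r / ‖w‖ * ‖w‖ ^ 2 = r * ‖w‖ := by field_simp
    rw [inner_sub_right]
    linarith
  have heq : ⟪w, p - x⟫ = ‖w‖ * ‖p - x‖ :=
    le_antisymm (real_inner_le_norm _ _) (by rwa [hpx, mul_comm])
  rw [← hpx]
  exact inner_eq_norm_mul_iff_real.mp heq

theorem Convex.inner_sub_lt_zero_of_mem_interior [CompleteSpace E] {C : Set E}
    (hC : Convex ℝ C) {x p y : E} {r : ℝ} (hr : 0 < r) (hball : closedBall x r ⊆ C)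
    (hp : p ∈ frontier C) (hd : dist x p = r) (hy : y ∈ interior C) :
    ⟪y - p, p - x⟫ < 0 := by
  obtain ⟨w, hw⟩ := hC.interior.exists_forall_inner_lt_of_isOpen isOpen_interior hp.2
  have hball_le : ∀ z ∈ closedBall x r, ⟪w, z⟫ ≤ ⟪w, p⟫ := by
    have hsub : ball x r ⊆ {z | ⟪w, z⟫ < ⟪w, p⟫} := fun z hz =>
      hw z (interior_maximal (ball_subset_closedBall.trans hball) isOpen_ball hz)
    intro z hz
    rw [← closure_ball x hr.ne'] at hz
    exact closure_lt_subset_le (continuous_const.inner continuous_id) continuous_const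
      (closure_mono hsub hz)
  have hnormal := smul_eq_norm_smul_of_forall_mem_closedBall_inner_le hd hball_le
  have hscaled : r * ⟪w, y - p⟫ = ‖w‖ * ⟪p - x, y - p⟫ := by
    rw [← real_inner_smul_left, ← real_inner_smul_left, hnormal]
  have hwy : ⟪w, y - p⟫ < 0 := by
    rw [inner_sub_right]
    linarith [hw y hy]
  rw [real_inner_comm]
  by_contra! h
  nlinarith [norm_nonneg w]

end

/-- If both agents satisfy their reciprocal half-plane constraints (each taking half of
the responsibility `u = p - (v_A - v_B)`), then the new relative velocity satisfies
`⟪(v_A' - v_B') - p, u⟫ ≥ 0` and does not lie in the interior of the convex velocity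
obstacle region `C`. -/
theorem reciprocal_halfplane_constraints_avoid_obstacle
    (C : Set (EuclideanSpace ℝ (Fin 2))) (hC : Convex ℝ C)
    (vA vB : EuclideanSpace ℝ (Fin 2))
    (x : EuclideanSpace ℝ (Fin 2)) (hx : x = vA - vB)
    (r : ℝ) (hr : 0 < r) (hball : closedBall x r ⊆ C)
    (p : EuclideanSpace ℝ (Fin 2)) (hp : p ∈ frontier C) (hd : dist x p = r)
    (u : EuclideanSpace ℝ (Fin 2)) (hu : u = p - x)
    (vA' vB' : EuclideanSpace ℝ (Fin 2))
    (hA : (0 : ℝ) ≤ inner ℝ (vA' - (vA + (1 / 2 : ℝ) • u)) u)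
    (hB : (inner ℝ (vB' - (vB - (1 / 2 : ℝ) • u)) u : ℝ) ≤ 0) :
    (0 : ℝ) ≤ inner ℝ ((vA' - vB') - p) u ∧ vA' - vB' ∉ interior C := by
  have hsplit : (vA' - vB') - p =
      (vA' - (vA + (1 / 2 : ℝ) • u)) - (vB' - (vB - (1 / 2 : ℝ) • u)) := by
    rw [hu, hx]
    module
  have hgap : (0 : ℝ) ≤ inner ℝ ((vA' - vB') - p) u := by
    rw [hsplit, inner_sub_left]
    linarith
  refine ⟨hgap, fun hy => ?_⟩
  have hneg := hC.inner_sub_lt_zero_of_mem_interior hr hball hp hd hy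
  rw [← hu] at hneg
  linarith
end
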